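/- Let D be the involution on the Grothendieck group of finite-dimensional representations of a finite Coxeter group W defined by D[M] = Σ_{I ⊆ S} (-1)^{|I|} [Ind_{W_I}^W Res_{W_I}^W M]. Then D[M] = [M ⊗ sgn], i.e., D is tensoring with the sign character; in particular D² = id. -/

import Mathlib

namespace AZFinite

open CoxeterSystem List Function
open scoped Classical

set_option linter.unusedSectionVars false
set_option maxHeartbeats 800000

variable {B : Type*} [Fintype B] {W : Type*} [Group W] [Fintype W]
variable {M : CoxeterMatrix B} (cs : CoxeterSystem M W)

local prefix:100 "σ" => cs.simple
local prefix:100 "π" => cs.wordProd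
local prefix:100 "ℓ" => cs.length

/-! ### The sign cocycle / strong exchange machinery -/

lemma simple_sandwich (i : B) (x : W) : σ i * (σ i * x * σ i) * σ i = x := by
  have hs := cs.simple_mul_simple_self i
  calc σ i * (σ i * x * σ i) * σ i = (σ i * σ i) * x * (σ i * σ i) := by
        simp only [mul_assoc]
    _ = x := by rw [hs]; simp

lemma simple_conj_eq_iff (i : B) (t u : W) :
    σ i * t * σ i = u ↔ t = σ i * u * σ i := by
  constructor
  · rintro rfl; exact (simple_sandwich cs i t).symm
  · rintro rfl; exact simple_sandwich cs i u

noncomputable def flip (i : B) : W × ℤˣ → W × ℤˣ :=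
  fun p => (cs.simple i * p.1 * cs.simple i, if p.1 = cs.simple i then -p.2 else p.2)

lemma flip_involutive (i : B) : Function.Involutive (flip cs i) := by
  rintro ⟨t, ε⟩
  show (σ i * (σ i * t * σ i) * σ i,
      if σ i * t * σ i = σ i then -(if t = σ i then -ε else ε) else (if t = σ i then -ε else ε))
    = (t, ε)
  have hc : (σ i * t * σ i = σ i) ↔ (t = σ i) := by
    rw [simple_conj_eq_iff cs, cs.simple_mul_simple_self, one_mul]
  rw [simple_sandwich cs]
  by_cases ht : t = σ i
  · simp [ht, hc]
  · simp [ht, hc]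

noncomputable def flipPerm (i : B) : Equiv.Perm (W × ℤˣ) := (flip_involutive cs i).toPerm

lemma flipPerm_apply (i : B) (p : W × ℤˣ) : flipPerm cs i p = flip cs i p := rfl

lemma flipPerm_mul_pow (i j : B) (k : ℕ) (t : W) (ε : ℤˣ) :
    ((flipPerm cs i * flipPerm cs j) ^ k) (t, ε) =
      ((σ i * σ j) ^ k * t * (σ j * σ i) ^ k,
        ε * ∏ n ∈ Finset.range (2 * k),
          (if t = (σ j * σ i) ^ n * σ j then (-1 : ℤˣ) else 1)) := by
  have cancel1 : (σ i * σ j) * (σ j * σ i) = 1 := by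
    calc (σ i * σ j) * (σ j * σ i) = σ i * (σ j * σ j) * σ i := by simp only [mul_assoc]
      _ = 1 := by rw [cs.simple_mul_simple_self, mul_one, cs.simple_mul_simple_self]
  have cancel2 : (σ j * σ i) * (σ i * σ j) = 1 := by
    calc (σ j * σ i) * (σ i * σ j) = σ j * (σ i * σ i) * σ j := by simp only [mul_assoc]
      _ = 1 := by rw [cs.simple_mul_simple_self, mul_one, cs.simple_mul_simple_self]
  have sand1 : ∀ X : W, (σ i * σ j) * ((σ j * σ i) * X * (σ i * σ j)) * (σ j * σ i) = X := by
    intro X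
    calc (σ i * σ j) * ((σ j * σ i) * X * (σ i * σ j)) * (σ j * σ i)
        = ((σ i * σ j) * (σ j * σ i)) * X * ((σ i * σ j) * (σ j * σ i)) := by
          simp only [mul_assoc]
      _ = X := by rw [cancel1]; simp
  have sand2 : ∀ X : W, (σ j * σ i) * ((σ i * σ j) * X * (σ j * σ i)) * (σ i * σ j) = X := by
    intro X
    calc (σ j * σ i) * ((σ i * σ j) * X * (σ j * σ i)) * (σ i * σ j)
        = ((σ j * σ i) * (σ i * σ j)) * X * ((σ j * σ i) * (σ i * σ j)) := by
          simp only [mul_assoc]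
      _ = X := by rw [cancel2]; simp
  have hcomm : ∀ (a : W) (n : ℕ), a * a ^ n = a ^ n * a := fun a n => by
    rw [← pow_succ', pow_succ]
  have K : ∀ n : ℕ, (σ j * σ i) * ((σ j * σ i) ^ n * σ j) * (σ i * σ j)
      = (σ j * σ i) ^ (2 + n) * σ j := by
    intro n
    have h2n : (2 + n) = n + 2 := by ring
    rw [h2n, pow_add, sq]
    calc (σ j * σ i) * ((σ j * σ i) ^ n * σ j) * (σ i * σ j)
        = ((σ j * σ i) * (σ j * σ i) ^ n) * (σ j * (σ i * σ j)) := by simp only [mul_assoc]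
      _ = ((σ j * σ i) ^ n * (σ j * σ i)) * ((σ j * σ i) * σ j) := by
          rw [hcomm]; simp only [mul_assoc]
      _ = (σ j * σ i) ^ n * ((σ j * σ i) * (σ j * σ i)) * σ j := by simp only [mul_assoc]
  induction k generalizing t ε with
  | zero => simp
  | succ k ih =>
    rw [pow_succ, Equiv.Perm.mul_apply]
    have hc1 : (σ j * t * σ j = σ i) ↔ (t = (σ j * σ i) ^ 1 * σ j) := by
      rw [simple_conj_eq_iff cs, pow_one, mul_assoc]
    have hinner : (flipPerm cs i * flipPerm cs j) (t, ε) =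
        (σ i * σ j * t * (σ j * σ i),
          ε * (if t = (σ j * σ i) ^ 0 * σ j then (-1 : ℤˣ) else 1)
            * (if t = (σ j * σ i) ^ 1 * σ j then (-1 : ℤˣ) else 1)) := by
      rw [Equiv.Perm.mul_apply, flipPerm_apply, flipPerm_apply]
      unfold flip
      dsimp only
      rw [Prod.mk.injEq]
      constructor
      · simp only [mul_assoc]
      · rw [hc1]
        have hc0 : (t = σ j) ↔ (t = (σ j * σ i) ^ 0 * σ j) := by rw [pow_zero, one_mul]
        by_cases h0 : t = σ j
        · have h0' : t = (σ j * σ i) ^ 0 * σ j := hc0.mp h0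
          by_cases h1 : t = (σ j * σ i) ^ 1 * σ j <;>
            simp [h0, h0', h1, mul_comm, mul_assoc]
        · have h0' : ¬ t = (σ j * σ i) ^ 0 * σ j := fun h => h0 (hc0.mpr h)
          by_cases h1 : t = (σ j * σ i) ^ 1 * σ j <;>
            simp [h0, h0', h1, mul_comm, mul_assoc]
    rw [hinner, ih]
    rw [Prod.mk.injEq]
    constructor
    · rw [pow_succ (σ i * σ j), pow_succ' (σ j * σ i)]
      simp only [mul_assoc]
    · have hshift : ∀ n : ℕ,
          (σ i * σ j * t * (σ j * σ i) = (σ j * σ i) ^ n * σ j)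
            ↔ (t = (σ j * σ i) ^ (2 + n) * σ j) := by
        intro n
        constructor
        · intro h
          have h2 : (σ j * σ i) * (σ i * σ j * t * (σ j * σ i)) * (σ i * σ j)
              = (σ j * σ i) * ((σ j * σ i) ^ n * σ j) * (σ i * σ j) := by rw [h]
          rw [show σ i * σ j * t * (σ j * σ i) = (σ i * σ j) * t * (σ j * σ i) by
            simp only [mul_assoc]] at h2
          rw [sand2, K] at h2
          exact h2
        · rintro rfl
          rw [← K n]
          exact sand1 _
      have hsplit : (2 * (k + 1)) = 2 + 2 * k := by ring
      have hp2 : (∏ n ∈ Finset.range 2,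
            (if t = (σ j * σ i) ^ n * σ j then (-1 : ℤˣ) else 1))
          = (if t = (σ j * σ i) ^ 0 * σ j then (-1 : ℤˣ) else 1)
            * (if t = (σ j * σ i) ^ 1 * σ j then (-1 : ℤˣ) else 1) := by
        rw [Finset.prod_range_succ, Finset.prod_range_one]
      have hcongr : (∏ n ∈ Finset.range (2 * k),
            (if σ i * σ j * t * (σ j * σ i) = (σ j * σ i) ^ n * σ j then (-1 : ℤˣ) else 1))
          = ∏ n ∈ Finset.range (2 * k),
            (if t = (σ j * σ i) ^ (2 + n) * σ j then (-1 : ℤˣ) else 1) :=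
        Finset.prod_congr rfl fun n _ => if_congr (hshift n) rfl rfl
      rw [hcongr, hsplit, Finset.prod_range_add, hp2]
      simp only [mul_assoc]

lemma isLiftable : M.IsLiftable (fun i => flipPerm cs i) := by
  intro i j
  show (flipPerm cs i * flipPerm cs j) ^ M i j = 1
  apply Equiv.ext
  rintro ⟨t, ε⟩
  rw [flipPerm_mul_pow]
  rw [cs.simple_mul_simple_pow i j, cs.simple_mul_simple_pow' i j]
  have hper : ∀ n : ℕ, ((σ j * σ i) ^ (M i j + n) * σ j) = ((σ j * σ i) ^ n * σ j) := by
    intro n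
    rw [pow_add, cs.simple_mul_simple_pow' i j, one_mul]
  rw [show (2 * M i j) = M i j + M i j by ring, Finset.prod_range_add]
  simp only [hper]
  rw [Int.units_mul_self, mul_one]
  rw [Equiv.Perm.one_apply]
  simp

noncomputable def phi : W →* Equiv.Perm (W × ℤˣ) := cs.lift ⟨fun i => flipPerm cs i, isLiftable cs⟩

lemma phi_simple (i : B) : phi cs (σ i) = flipPerm cs i := cs.lift_apply_simple (isLiftable cs) i

noncomputable def nn (w t : W) : ℤˣ := ((phi cs w) (t, 1)).2

lemma phi_apply : ∀ (w t : W) (ε : ℤˣ), phi cs w (t, ε) = (w * t * w⁻¹, ε * nn cs w t) := by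
  have main : ∀ w : W, ∀ (t : W) (ε : ℤˣ),
      phi cs w (t, ε) = (w * t * w⁻¹, ε * ((phi cs w) (t, 1)).2) := by
    intro w
    induction w using cs.simple_induction with
    | simple i =>
      intro t ε
      rw [phi_simple, flipPerm_apply, flipPerm_apply]
      unfold flip
      dsimp only
      rw [cs.inv_simple]
      by_cases ht : t = σ i <;> simp [ht]
    | one =>
      intro t ε
      simp
    | mul w₁ w₂ h₁ h₂ =>
      intro t ε
      rw [map_mul, Equiv.Perm.mul_apply, h₂ t ε, h₁ (w₂ * t * w₂⁻¹) (ε * (phi cs w₂ (t, 1)).2),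
        Equiv.Perm.mul_apply, h₂ t 1, h₁ (w₂ * t * w₂⁻¹) (1 * (phi cs w₂ (t, 1)).2)]
      rw [Prod.mk.injEq]
      constructor
      · rw [mul_inv_rev]; simp only [mul_assoc]
      · dsimp only
        rw [one_mul, mul_assoc]
  exact fun w t ε => main w t ε

lemma nn_mul (u v t : W) : nn cs (u * v) t = nn cs v t * nn cs u (v * t * v⁻¹) := by
  have h := phi_apply cs (u * v) t 1
  rw [map_mul, Equiv.Perm.mul_apply, phi_apply cs v t 1, phi_apply cs u (v * t * v⁻¹) (1 * nn cs v t)] at h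
  have := congrArg Prod.snd h
  dsimp only at this
  rw [one_mul, one_mul] at this
  exact this.symm

lemma nn_simple (i : B) (t : W) : nn cs (σ i) t = if t = σ i then -1 else 1 := by
  rw [nn, phi_simple]
  rfl

lemma nn_one (t : W) : nn cs 1 t = 1 := by
  rw [nn, map_one]
  rfl

end AZFinite

namespace AZFinite
open CoxeterSystem List Function
open scoped Classical

section Part2
variable {B : Type*} [Fintype B] {W : Type*} [Group W] [Fintype W]
variable {M : CoxeterMatrix B} (cs : CoxeterSystem M W)

local prefix:100 "σ" => cs.simple
local prefix:100 "π" => cs.wordProd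
local prefix:100 "ℓ" => cs.length

lemma conj_eq_iff (a t u : W) : a * t * a⁻¹ = u ↔ t = a⁻¹ * u * a := by
  constructor
  · rintro rfl; group
  · rintro rfl; group

lemma ris_cons (i : B) (ω : List B) :
    cs.rightInvSeq (i :: ω) = ((π ω)⁻¹ * σ i * π ω) :: cs.rightInvSeq ω := rfl

lemma nn_wordProd (ω : List B) (t : W) :
    nn cs (π ω) t = (-1 : ℤˣ) ^ (List.count t (cs.rightInvSeq ω)) := by
  induction ω generalizing t with
  | nil => simp [nn_one]
  | cons i ω ih =>
    rw [wordProd_cons, nn_mul, ris_cons, ih, nn_simple, List.count_cons]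
    simp only [beq_iff_eq]
    have hcond : (π ω * t * (π ω)⁻¹ = σ i) ↔ (t = (π ω)⁻¹ * σ i * π ω) := conj_eq_iff _ _ _
    by_cases h : t = (π ω)⁻¹ * σ i * π ω
    · rw [if_pos (hcond.mpr h), if_pos h.symm, pow_add, pow_one]
    · rw [if_neg (fun hh => h (hcond.mp hh)), if_neg (fun hh => h hh.symm), add_zero, mul_one]

lemma mem_ris_of_nn_neg {w t : W} (h : nn cs w t = -1) {ω : List B} (hω : π ω = w) :
    t ∈ cs.rightInvSeq ω := by
  have h2 := nn_wordProd cs ω t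
  rw [hω, h] at h2
  by_contra hmem
  rw [List.count_eq_zero_of_not_mem hmem, pow_zero] at h2
  exact absurd h2.symm (by decide)

lemma length_mul_lt_of_nn_neg {w t : W} (h : nn cs w t = -1) : ℓ (w * t) < ℓ w := by
  obtain ⟨ω, hlen, hw⟩ := cs.exists_reduced_word w
  have hmem : t ∈ cs.rightInvSeq ω := mem_ris_of_nn_neg cs h hw.symm
  obtain ⟨k, hk, hget⟩ := List.mem_iff_getElem.mp hmem
  have hgetD : (cs.rightInvSeq ω).getD k 1 = t := by
    rw [List.getD_eq_getElem _ _ hk, hget]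
  have hprod := cs.wordProd_mul_getD_rightInvSeq ω k
  rw [hgetD, ← hw] at hprod
  have hk' : k < ω.length := by
    have := cs.length_rightInvSeq ω
    omega
  calc ℓ (w * t) ≤ (ω.eraseIdx k).length := hprod ▸ cs.length_wordProd_le _
    _ < ω.length := by rw [List.length_eraseIdx_of_lt hk']; omega
    _ = ℓ w := by rw [hw]; exact (show ℓ (π ω) = ω.length from hlen).symm

lemma nn_inv_conj (u x : W) : nn cs u⁻¹ (u * x * u⁻¹) = nn cs u x := by
  have h : nn cs (u⁻¹ * u) x = 1 := by rw [inv_mul_cancel, nn_one]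
  rw [nn_mul] at h
  have h2 := Int.units_mul_self (nn cs u x)
  calc nn cs u⁻¹ (u * x * u⁻¹) = 1 * nn cs u⁻¹ (u * x * u⁻¹) := (one_mul _).symm
    _ = (nn cs u x * nn cs u x) * nn cs u⁻¹ (u * x * u⁻¹) := by rw [h2]
    _ = nn cs u x * (nn cs u x * nn cs u⁻¹ (u * x * u⁻¹)) := by rw [mul_assoc]
    _ = nn cs u x * 1 := by rw [h]
    _ = nn cs u x := mul_one _

lemma nn_refl {t : W} (ht : cs.IsReflection t) : nn cs t t = -1 := by
  obtain ⟨u, i, rfl⟩ := ht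
  have hA : nn cs (u * σ i * u⁻¹) (u * σ i * u⁻¹)
      = nn cs (σ i * u⁻¹) (u * σ i * u⁻¹) * nn cs u (σ i) := by
    have hm := nn_mul cs u (σ i * u⁻¹) (u * σ i * u⁻¹)
    rw [show u * (σ i * u⁻¹) = u * σ i * u⁻¹ by rw [mul_assoc]] at hm
    rw [hm]
    refine congrArg _ (congrArg _ ?_)
    rw [mul_inv_rev, inv_inv, cs.inv_simple]
    calc σ i * u⁻¹ * (u * σ i * u⁻¹) * (u * σ i)
        = σ i * (u⁻¹ * (u * (σ i * (u⁻¹ * (u * σ i))))) := by simp only [mul_assoc]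
      _ = σ i * (σ i * σ i) := by simp only [inv_mul_cancel_left]
      _ = σ i := by rw [cs.simple_mul_simple_self, mul_one]
  have hB : nn cs (σ i * u⁻¹) (u * σ i * u⁻¹) = nn cs u⁻¹ (u * σ i * u⁻¹) * -1 := by
    rw [nn_mul]
    refine congrArg _ ?_
    rw [show u⁻¹ * (u * σ i * u⁻¹) * u⁻¹⁻¹ = σ i by group, nn_simple, if_pos rfl]
  have hC : nn cs u⁻¹ (u * σ i * u⁻¹) = nn cs u (σ i) := nn_inv_conj cs u (σ i)
  rw [hA, hB, hC]
  calc nn cs u (σ i) * -1 * nn cs u (σ i) = -(nn cs u (σ i) * nn cs u (σ i)) := by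
        rw [mul_comm _ (-1 : ℤˣ), mul_assoc]; simp
    _ = -1 := by rw [Int.units_mul_self]

lemma nn_neg_of_length_lt {w t : W} (ht : cs.IsReflection t) (h : ℓ (w * t) < ℓ w) :
    nn cs w t = -1 := by
  rcases Int.units_eq_one_or (nn cs w t) with h1 | h1
  · exfalso
    have h2 : nn cs (w * t) t = -1 := by
      rw [nn_mul]
      rw [show t * t * t⁻¹ = t by rw [ht.mul_self, one_mul, ht.inv]]
      rw [nn_refl cs ht, h1, mul_one]
    have h3 := length_mul_lt_of_nn_neg cs h2
    rw [mul_assoc, ht.mul_self, mul_one] at h3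
    omega
  · exact h1

lemma isReflection_of_nn_neg {w t : W} (h : nn cs w t = -1) : cs.IsReflection t := by
  obtain ⟨ω, hlen, hw⟩ := cs.exists_reduced_word w
  exact cs.isReflection_of_mem_rightInvSeq ω (mem_ris_of_nn_neg cs h hw.symm)

noncomputable def invSet (w : W) : Finset W := Finset.univ.filter (fun t => nn cs w t = -1)

lemma card_invSet (w : W) : (invSet cs w).card = ℓ w := by
  obtain ⟨ω, hlen, hw⟩ := cs.exists_reduced_word w
  have hred : cs.IsReduced ω := hlen
  have heq : invSet cs w = (cs.rightInvSeq ω).toFinset := by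
    ext t
    simp only [invSet, Finset.mem_filter, Finset.mem_univ, true_and, List.mem_toFinset]
    constructor
    · intro h; exact mem_ris_of_nn_neg cs h hw.symm
    · intro h
      have h2 := cs.isRightInversion_of_mem_rightInvSeq hred h
      rw [hw]
      exact nn_neg_of_length_lt cs h2.1 h2.2
  rw [heq, List.toFinset_card_of_nodup hred.nodup_rightInvSeq, cs.length_rightInvSeq, hw]
  exact (show ℓ (π ω) = ω.length from hlen).symm

end Part2
end AZFinite

namespace AZFinite
open CoxeterSystem List Function
open scoped Classical

section Part3
variable {B : Type*} [Fintype B] {W : Type*} [Group W] [Fintype W]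
variable {M : CoxeterMatrix B} (cs : CoxeterSystem M W)

local prefix:100 "σ" => cs.simple
local prefix:100 "π" => cs.wordProd
local prefix:100 "ℓ" => cs.length

/-! ### Longest element -/

lemma exists_max : ∃ z : W, ∀ w : W, ℓ w ≤ ℓ z := by
  obtain ⟨z, _, hz⟩ := Finset.exists_max_image (Finset.univ : Finset W) cs.length
    ⟨1, Finset.mem_univ 1⟩
  exact ⟨z, fun w => hz w (Finset.mem_univ w)⟩

noncomputable def TT : Finset W := Finset.univ.filter (fun t => cs.IsReflection t)

lemma nn_max_neg {z : W} (hz : ∀ w, ℓ w ≤ ℓ z) {t : W} (ht : cs.IsReflection t) :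
    nn cs z t = -1 :=
  nn_neg_of_length_lt cs ht (lt_of_le_of_ne (hz _) (ht.length_mul_left_ne z))

lemma length_max_mul {z : W} (hz : ∀ w, ℓ w ≤ ℓ z) (u : W) :
    ℓ (z * u) + ℓ u = (TT cs).card := by
  have hsub : invSet cs u ⊆ TT cs := by
    intro t ht
    simp only [invSet, Finset.mem_filter, Finset.mem_univ, true_and] at ht
    simp only [TT, Finset.mem_filter, Finset.mem_univ, true_and]
    exact isReflection_of_nn_neg cs ht
  have h1 : invSet cs (z * u) = TT cs \ invSet cs u := by
    ext t
    simp only [invSet, TT, Finset.mem_sdiff, Finset.mem_filter, Finset.mem_univ, true_and]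
    constructor
    · intro h
      have htref : cs.IsReflection t := isReflection_of_nn_neg cs h
      have hconj : cs.IsReflection (u * t * u⁻¹) := htref.conj u
      have hm := nn_mul cs z u t
      rw [nn_max_neg cs hz hconj, h] at hm
      refine ⟨htref, fun hneg => ?_⟩
      rw [hneg] at hm
      exact absurd hm (by decide)
    · rintro ⟨htref, hpos⟩
      have hconj : cs.IsReflection (u * t * u⁻¹) := htref.conj u
      have hm := nn_mul cs z u t
      rw [nn_max_neg cs hz hconj] at hm
      rcases Int.units_eq_one_or (nn cs u t) with h1 | h1
      · rw [h1, one_mul] at hm; exact hm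
      · exact absurd h1 hpos
  have h2 : (TT cs \ invSet cs u).card = (TT cs).card - (invSet cs u).card :=
    Finset.card_sdiff_of_subset hsub
  have h3 := Finset.card_le_card hsub
  have h4 := card_invSet cs (z * u)
  have h5 := card_invSet cs u
  rw [h1, h2] at h4
  omega

lemma all_right_descent_eq {z z' : W} (hz : ∀ w, ℓ w ≤ ℓ z)
    (h : ∀ i : B, cs.IsRightDescent z' i) : z' = z := by
  by_cases hv1 : z⁻¹ * z' = 1
  · have h2 : z * (z⁻¹ * z') = z * 1 := congrArg (z * ·) hv1
    simpa [mul_assoc] using h2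
  · exfalso
    obtain ⟨i, hi⟩ := cs.exists_rightDescent_of_ne_one hv1
    have hi' : ℓ ((z⁻¹ * z') * σ i) < ℓ (z⁻¹ * z') := hi
    have e1 := length_max_mul cs hz (z⁻¹ * z')
    have e2 := length_max_mul cs hz ((z⁻¹ * z') * σ i)
    have hzv : z * (z⁻¹ * z') = z' := by group
    have hzvi : z * ((z⁻¹ * z') * σ i) = z' * σ i := by group
    rw [hzv] at e1
    rw [hzvi] at e2
    have hd : ℓ (z' * σ i) < ℓ z' := h i
    omega

lemma card_allDescents :
    (Finset.univ.filter (fun z : W =>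
      (∀ i : B, cs.IsLeftDescent z i) ∧ (∀ i : B, cs.IsRightDescent z i))).card = 1 := by
  obtain ⟨z, hz⟩ := exists_max cs
  rw [Finset.card_eq_one]
  refine ⟨z, ?_⟩
  ext w
  simp only [Finset.mem_filter, Finset.mem_univ, true_and, Finset.mem_singleton]
  constructor
  · rintro ⟨_, hr⟩; exact all_right_descent_eq cs hz hr
  · rintro rfl
    refine ⟨fun i => ?_, fun i => ?_⟩
    · exact lt_of_le_of_ne (hz _) ((cs.isReflection_simple i).length_mul_right_ne _)
    · exact lt_of_le_of_ne (hz _) ((cs.isReflection_simple i).length_mul_left_ne _)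

/-! ### Deletion property -/

lemma exists_delete {ω : List B} (h : ¬ cs.IsReduced ω) :
    ∃ ζ : List B, ζ.Sublist ω ∧ ζ.length + 2 = ω.length ∧ π ζ = π ω := by
  induction ω using List.reverseRecOn with
  | nil => exact absurd (by simp [CoxeterSystem.IsReduced]) h
  | append_singleton ω' j ih =>
    by_cases hred : cs.IsReduced ω'
    · have hlenred : ℓ (π ω') = ω'.length := hred
      have hprod : π (ω' ++ [j]) = π ω' * σ j := by
        rw [wordProd_append, wordProd_singleton]
      have hlt : ℓ (π ω' * σ j) < ω'.length + 1 := by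
        have hle := cs.length_wordProd_le (ω' ++ [j])
        rw [List.length_append, List.length_singleton, hprod] at hle
        have hne : ℓ (π ω' * σ j) ≠ ω'.length + 1 := by
          intro hh
          apply h
          show ℓ (π (ω' ++ [j])) = (ω' ++ [j]).length
          rw [hprod, hh, List.length_append, List.length_singleton]
        omega
      have hdesc : ℓ (π ω' * σ j) < ℓ (π ω') := by
        rcases cs.length_mul_simple (π ω') j with hh | hh
        · omega
        · omega
      have hnn : nn cs (π ω') (σ j) = -1 :=
        nn_neg_of_length_lt cs (cs.isReflection_simple j) hdesc
      have hmem : σ j ∈ cs.rightInvSeq ω' := mem_ris_of_nn_neg cs hnn rfl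
      obtain ⟨k, hk, hget⟩ := List.mem_iff_getElem.mp hmem
      have hk' : k < ω'.length := by have := cs.length_rightInvSeq ω'; omega
      have hgetD : (cs.rightInvSeq ω').getD k 1 = σ j := by
        rw [List.getD_eq_getElem _ _ hk, hget]
      have hprod2 := cs.wordProd_mul_getD_rightInvSeq ω' k
      rw [hgetD] at hprod2
      refine ⟨ω'.eraseIdx k, ?_, ?_, ?_⟩
      · exact (List.eraseIdx_sublist ω' k).trans (List.sublist_append_left ω' [j])
      · rw [List.length_eraseIdx_of_lt hk', List.length_append, List.length_singleton]
        omega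
      · rw [hprod, ← hprod2]
    · obtain ⟨ζ, hsub, hlen, hπ⟩ := ih hred
      refine ⟨ζ ++ [j], hsub.append_right [j], ?_, ?_⟩
      · rw [List.length_append, List.length_append, List.length_singleton]
        omega
      · rw [wordProd_append, wordProd_append, hπ]

lemma exists_reduced_sublist (ω : List B) :
    ∃ ζ : List B, ζ.Sublist ω ∧ cs.IsReduced ζ ∧ π ζ = π ω := by
  have H : ∀ n (ω : List B), ω.length ≤ n →
      ∃ ζ : List B, ζ.Sublist ω ∧ cs.IsReduced ζ ∧ π ζ = π ω := by
    intro n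
    induction n with
    | zero =>
      intro ω hω
      have : ω = [] := List.eq_nil_of_length_eq_zero (Nat.le_zero.mp hω)
      subst this
      exact ⟨[], List.Sublist.refl [], by simp [CoxeterSystem.IsReduced], rfl⟩
    | succ n ihn =>
      intro ω hω
      by_cases hred : cs.IsReduced ω
      · exact ⟨ω, List.Sublist.refl ω, hred, rfl⟩
      · obtain ⟨ζ, hsub, hlen, hπ⟩ := exists_delete cs hred
        obtain ⟨ζ', hsub', hred', hπ'⟩ := ihn ζ (by omega)
        exact ⟨ζ', hsub'.trans hsub, hred', by rw [hπ', hπ]⟩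
  exact H ω.length ω le_rfl

/-! ### Parabolic subgroups -/

noncomputable def PP (I : Finset B) : Subgroup W := Subgroup.closure (cs.simple '' (I : Set B))

lemma mem_PP_of_word {I : Finset B} (ω : List B) (h : ∀ i ∈ ω, i ∈ I) : π ω ∈ PP cs I := by
  induction ω with
  | nil => rw [wordProd_nil]; exact one_mem _
  | cons i ω ih =>
    rw [wordProd_cons]
    refine mul_mem (Subgroup.subset_closure ⟨i, ?_, rfl⟩) (ih fun x hx => h x (by simp [hx]))
    simpa using h i (by simp)

lemma mem_PP_iff {I : Finset B} {w : W} :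
    w ∈ PP cs I ↔ ∃ ω : List B, (∀ i ∈ ω, i ∈ I) ∧ π ω = w := by
  constructor
  · intro hw
    induction hw using Subgroup.closure_induction with
    | mem x hx =>
      obtain ⟨i, hi, rfl⟩ := hx
      exact ⟨[i], by simpa using hi, by simp⟩
    | one => exact ⟨[], by simp, by simp⟩
    | mul x y hx hy ihx ihy =>
      obtain ⟨ω₁, h₁, rfl⟩ := ihx
      obtain ⟨ω₂, h₂, rfl⟩ := ihy
      refine ⟨ω₁ ++ ω₂, ?_, by rw [wordProd_append]⟩
      intro i hi
      rcases List.mem_append.mp hi with h | h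
      · exact h₁ i h
      · exact h₂ i h
    | inv x hx ihx =>
      obtain ⟨ω, h₁, rfl⟩ := ihx
      refine ⟨ω.reverse, ?_, by rw [wordProd_reverse]⟩
      intro i hi
      exact h₁ i (List.mem_reverse.mp hi)
  · rintro ⟨ω, h, rfl⟩
    exact mem_PP_of_word cs ω h

lemma exists_reduced_word_mem {I : Finset B} {w : W} (hw : w ∈ PP cs I) :
    ∃ ω : List B, (∀ i ∈ ω, i ∈ I) ∧ cs.IsReduced ω ∧ π ω = w := by
  obtain ⟨ω, hmem, hπ⟩ := (mem_PP_iff cs).mp hw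
  obtain ⟨ζ, hsub, hred, hπ'⟩ := exists_reduced_sublist cs ω
  exact ⟨ζ, fun i hi => hmem i (hsub.subset hi), hred, by rw [hπ', hπ]⟩

end Part3
end AZFinite

namespace AZFinite
open CoxeterSystem List Function MulAction
open scoped Classical

section Part4
variable {B : Type*} [Fintype B] {W : Type*} [Group W] [Fintype W]
variable {M : CoxeterMatrix B} (cs : CoxeterSystem M W)

local prefix:100 "σ" => cs.simple
local prefix:100 "π" => cs.wordProd
local prefix:100 "ℓ" => cs.length

variable (I J : Finset B)

/-- The acting group for double cosets. -/
abbrev DC := (↥(PP cs I)) × (↥(PP cs J))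

noncomputable instance : MulAction (DC cs I J) W where
  smul g w := (g.1 : W) * w * ((g.2 : W))⁻¹
  one_smul w := by
    show ((1 : ↥(PP cs I)) : W) * w * (((1 : ↥(PP cs J)) : W))⁻¹ = w
    simp
  mul_smul g h w := by
    show ((g.1 * h.1 : ↥(PP cs I)) : W) * w * (((g.2 * h.2 : ↥(PP cs J)) : W))⁻¹
      = (g.1 : W) * ((h.1 : W) * w * ((h.2 : W))⁻¹) * ((g.2 : W))⁻¹
    push_cast
    rw [mul_inv_rev]
    simp only [mul_assoc]

lemma dc_smul_def (g : DC cs I J) (w : W) : g • w = (g.1 : W) * w * ((g.2 : W))⁻¹ := rfl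

lemma mem_orbit_iff' {w y : W} :
    y ∈ MulAction.orbit (DC cs I J) w ↔ ∃ u ∈ PP cs I, ∃ v ∈ PP cs J, y = u * w * v := by
  constructor
  · intro hy
    obtain ⟨⟨u, v⟩, rfl⟩ := MulAction.mem_orbit_iff.mp hy
    exact ⟨u, u.2, (v : W)⁻¹, inv_mem v.2, rfl⟩
  · rintro ⟨u, hu, v, hv, rfl⟩
    refine MulAction.mem_orbit_iff.mpr ⟨(⟨u, hu⟩, ⟨v⁻¹, inv_mem hv⟩), ?_⟩
    rw [dc_smul_def]
    simp

/-- `z` is `(I,J)`-reduced. -/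
def Red (z : W) : Prop :=
  (∀ i ∈ I, ¬ cs.IsLeftDescent z i) ∧ (∀ j ∈ J, ¬ cs.IsRightDescent z j)

lemma exists_red_min (w : W) :
    ∃ z ∈ MulAction.orbit (DC cs I J) w, Red cs I J z ∧
      ∀ y ∈ MulAction.orbit (DC cs I J) w, ℓ z ≤ ℓ y := by
  obtain ⟨z, hzmem, hzmin⟩ := Finset.exists_min_image
    (Finset.univ.filter (fun y => y ∈ MulAction.orbit (DC cs I J) w)) cs.length
    ⟨w, by simp [MulAction.mem_orbit_self]⟩
  simp only [Finset.mem_filter, Finset.mem_univ, true_and] at hzmem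
  have hmin : ∀ y ∈ MulAction.orbit (DC cs I J) w, ℓ z ≤ ℓ y := by
    intro y hy
    exact hzmin y (by simp [hy])
  refine ⟨z, hzmem, ⟨?_, ?_⟩, hmin⟩
  · intro i hi hdesc
    have hmem2 : σ i * z ∈ MulAction.orbit (DC cs I J) w := by
      obtain ⟨u, hu, v, hv, rfl⟩ := (mem_orbit_iff' cs I J).mp hzmem
      exact (mem_orbit_iff' cs I J).mpr
        ⟨σ i * u, mul_mem (Subgroup.subset_closure ⟨i, by simpa using hi, rfl⟩) hu, v, hv,
          by simp only [mul_assoc]⟩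
    have := hmin _ hmem2
    have hlt : ℓ (σ i * z) < ℓ z := hdesc
    omega
  · intro j hj hdesc
    have hmem2 : z * σ j ∈ MulAction.orbit (DC cs I J) w := by
      obtain ⟨u, hu, v, hv, rfl⟩ := (mem_orbit_iff' cs I J).mp hzmem
      exact (mem_orbit_iff' cs I J).mpr
        ⟨u, hu, v * σ j, mul_mem hv (Subgroup.subset_closure ⟨j, by simpa using hj, rfl⟩),
          by simp only [mul_assoc]⟩
    have := hmin _ hmem2
    have hlt : ℓ (z * σ j) < ℓ z := hdesc
    omega

lemma red_eq_min {w z zm : W} (hzm : zm ∈ MulAction.orbit (DC cs I J) w)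
    (hmin : ∀ y ∈ MulAction.orbit (DC cs I J) w, ℓ zm ≤ ℓ y)
    (hz : z ∈ MulAction.orbit (DC cs I J) w) (hred : Red cs I J z) : z = zm := by
  have horb : z ∈ MulAction.orbit (DC cs I J) zm := by
    rw [MulAction.orbit_eq_iff.mpr hzm]
    exact hz
  obtain ⟨u, hu, v, hv, hz_eq⟩ := (mem_orbit_iff' cs I J).mp horb
  have hex : ∃ n, ∃ a b : List B, (∀ i ∈ a, i ∈ I) ∧ cs.IsReduced a ∧
      (∀ j ∈ b, j ∈ J) ∧ cs.IsReduced b ∧ π a * zm * π b = z ∧ a.length + b.length = n := by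
    obtain ⟨a, haI, hared, hπa⟩ := exists_reduced_word_mem cs hu
    obtain ⟨b, hbJ, hbred, hπb⟩ := exists_reduced_word_mem cs hv
    exact ⟨a.length + b.length, a, b, haI, hared, hbJ, hbred,
      by rw [hπa, hπb, ← hz_eq], rfl⟩
  obtain ⟨a, b, haI, hared, hbJ, hbred, hprod, hsum⟩ := Nat.find_spec hex
  obtain ⟨c, hcred, hπc⟩ := cs.exists_reduced_word' zm
  have hπω : π (a ++ (c ++ b)) = z := by
    rw [wordProd_append, wordProd_append, ← hπc, ← mul_assoc, hprod]
  by_cases hredω : cs.IsReduced (a ++ (c ++ b))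
  · have hlenz : ℓ z = a.length + (c.length + b.length) := by
      rw [← hπω]
      have := hredω
      rw [CoxeterSystem.IsReduced] at this
      rw [this]
      simp [List.length_append]
    have ha_nil : a = [] := by
      cases a with
      | nil => rfl
      | cons i a' =>
        exfalso
        have hiI : i ∈ I := haI i (by simp)
        have hlt : ℓ (σ i * z) < ℓ z := by
          have h1 : σ i * z = π (a' ++ (c ++ b)) := by
            rw [← hπω, List.cons_append, wordProd_cons, ← mul_assoc,
              cs.simple_mul_simple_self, one_mul]
          rw [h1]
          have h2 := cs.length_wordProd_le (a' ++ (c ++ b))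
          have h3 : (a' ++ (c ++ b)).length + 1 = (i :: a' ++ (c ++ b)).length := by
            simp [List.length_append]
          rw [hlenz]
          simp only [List.length_append, List.length_cons] at h2 h3 ⊢
          omega
        exact hred.1 i hiI hlt
    have hb_nil : b = [] := by
      cases hbe : b.reverse with
      | nil => simpa using congrArg List.reverse hbe
      | cons j b'' =>
        exfalso
        have hb' : b = b''.reverse ++ [j] := by
          have := congrArg List.reverse hbe
          simpa using this
        have hjJ : j ∈ J := hbJ j (by rw [hb']; simp)
        have hlt : ℓ (z * σ j) < ℓ z := by
          have h1 : z * σ j = π (a ++ (c ++ b''.reverse)) := by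
            rw [← hπω, hb']
            rw [show a ++ (c ++ (b''.reverse ++ [j])) = (a ++ (c ++ b''.reverse)) ++ [j] by
              simp [List.append_assoc]]
            rw [wordProd_append, wordProd_singleton, mul_assoc,
              cs.simple_mul_simple_self, mul_one]
          rw [h1]
          have h2 := cs.length_wordProd_le (a ++ (c ++ b''.reverse))
          rw [hlenz, hb']
          simp only [List.length_append, List.length_reverse, List.length_singleton] at h2 ⊢
          omega
        exact hred.2 j hjJ hlt
    rw [ha_nil, hb_nil] at hprod
    simp only [wordProd_nil, one_mul, mul_one] at hprod
    exact hprod.symm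
  · obtain ⟨ζ, hζsub, hζlen, hζπ⟩ := exists_delete cs hredω
    obtain ⟨a₁, d, hζeq, ha₁, hd⟩ := List.sublist_append_iff.mp hζsub
    obtain ⟨c₁, b₁, hdeq, hc₁, hb₁⟩ := List.sublist_append_iff.mp hd
    have hπζ2 : π a₁ * π c₁ * π b₁ = z := by
      rw [← hπω, ← hζπ, hζeq, hdeq, wordProd_append, wordProd_append, mul_assoc]
    have hlen_sum : a₁.length + (c₁.length + b₁.length) + 2
        = a.length + (c.length + b.length) := by
      have h5 := hζlen
      rw [hζeq, hdeq] at h5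
      simp only [List.length_append] at h5 ⊢
      omega
    by_cases hcc : c₁.length = c.length
    · have hc₁eq : c₁ = c := hc₁.eq_of_length hcc
      obtain ⟨a₂, ha₂sub, ha₂red, hπa₂⟩ := exists_reduced_sublist cs a₁
      obtain ⟨b₂, hb₂sub, hb₂red, hπb₂⟩ := exists_reduced_sublist cs b₁
      have hwit : ∃ a' b' : List B, (∀ i ∈ a', i ∈ I) ∧ cs.IsReduced a' ∧
          (∀ j ∈ b', j ∈ J) ∧ cs.IsReduced b' ∧ π a' * zm * π b' = z ∧
          a'.length + b'.length = a₂.length + b₂.length := by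
        refine ⟨a₂, b₂, ?_, ha₂red, ?_, hb₂red, ?_, rfl⟩
        · exact fun i hi => haI i (ha₁.subset (ha₂sub.subset hi))
        · exact fun j hj => hbJ j (hb₁.subset (hb₂sub.subset hj))
        · rw [hπa₂, hπb₂, ← hπζ2, hc₁eq, hπc]
      have hlt : a₂.length + b₂.length < Nat.find hex := by
        have h1 := ha₂sub.length_le
        have h2 := hb₂sub.length_le
        omega
      exact absurd hwit (Nat.find_min hex hlt)
    · have hlcc : c₁.length < c.length := lt_of_le_of_ne hc₁.length_le hcc
      have hπc₁orb : π c₁ ∈ MulAction.orbit (DC cs I J) w := by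
        have hu' : (π a₁)⁻¹ ∈ PP cs I :=
          inv_mem (mem_PP_of_word cs a₁ (fun i hi => haI i (ha₁.subset hi)))
        have hv' : (π b₁)⁻¹ ∈ PP cs J :=
          inv_mem (mem_PP_of_word cs b₁ (fun j hj => hbJ j (hb₁.subset hj)))
        have heq : π c₁ = (π a₁)⁻¹ * z * (π b₁)⁻¹ := by rw [← hπζ2]; group
        obtain ⟨u₀, hu₀, v₀, hv₀, hz0⟩ := (mem_orbit_iff' cs I J).mp hz
        rw [heq, hz0]
        exact (mem_orbit_iff' cs I J).mpr
          ⟨(π a₁)⁻¹ * u₀, mul_mem hu' hu₀, v₀ * (π b₁)⁻¹, mul_mem hv₀ hv', by group⟩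
      have hshort : ℓ (π c₁) < ℓ zm := by
        calc ℓ (π c₁) ≤ c₁.length := cs.length_wordProd_le _
          _ < c.length := hlcc
          _ = ℓ zm := by rw [hπc]; exact hcred.symm
      exact absurd (hmin _ hπc₁orb) (by omega)

noncomputable def redCount : ℕ := (Finset.univ.filter (Red cs I J)).card

lemma card_orbits_eq_red :
    Fintype.card (Quotient (MulAction.orbitRel (DC cs I J) W)) = redCount cs I J := by
  have hbij : Function.Bijective
      (fun z : {z : W // Red cs I J z} =>
        (⟦z.1⟧ : Quotient (MulAction.orbitRel (DC cs I J) W))) := by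
    constructor
    · rintro ⟨z₁, h₁⟩ ⟨z₂, h₂⟩ h
      have hrel : z₁ ∈ MulAction.orbit (DC cs I J) z₂ := Quotient.exact h
      obtain ⟨zmin, hzmin_mem, _, hzmin_min⟩ := exists_red_min cs I J z₂
      have e1 : z₁ = zmin := red_eq_min cs I J hzmin_mem hzmin_min hrel h₁
      have e2 : z₂ = zmin := red_eq_min cs I J hzmin_mem hzmin_min
        (MulAction.mem_orbit_self z₂) h₂
      exact Subtype.ext (e1.trans e2.symm)
    · intro q
      induction q using Quotient.inductionOn with
      | h w =>
        obtain ⟨z, hz, hzred, _⟩ := exists_red_min cs I J w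
        exact ⟨⟨z, hzred⟩, Quotient.sound hz⟩
  calc Fintype.card (Quotient (MulAction.orbitRel (DC cs I J) W))
      = Fintype.card {z : W // Red cs I J z} := (Fintype.card_of_bijective hbij).symm
    _ = redCount cs I J := by rw [Fintype.card_subtype]; rfl

end Part4
end AZFinite

namespace AZFinite
open CoxeterSystem List Function MulAction
open scoped Classical

section Part5
variable {B : Type*} [Fintype B] {W : Type*} [Group W] [Fintype W]
variable {M : CoxeterMatrix B} (cs : CoxeterSystem M W)

local prefix:100 "σ" => cs.simple
local prefix:100 "π" => cs.wordProd
local prefix:100 "ℓ" => cs.length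

variable (I J : Finset B)

noncomputable def NI (w : W) : ℕ :=
  (Finset.univ.filter (fun x : W => x⁻¹ * w * x ∈ PP cs I)).card

lemma NI_eq (w : W) :
    (NI cs I w : ℕ) = ∑ x : W, (if x⁻¹ * w * x ∈ PP cs I then 1 else 0) := by
  rw [NI, Finset.card_filter]

/-- Number of pairs (z, b) with b ∈ W_J and z b z⁻¹ ∈ W_I. -/
noncomputable def cIJ : ℕ :=
  ∑ z : W, ∑ b : W, (if b ∈ PP cs J ∧ z * b * z⁻¹ ∈ PP cs I then 1 else 0)

def conjEquiv (x : W) : W ≃ W where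
  toFun u := x * u * x⁻¹
  invFun u := x⁻¹ * u * x
  left_inv u := by group
  right_inv u := by group

@[simp] lemma conjEquiv_apply (x u : W) : conjEquiv x u = x * u * x⁻¹ := rfl

lemma sum_indicator_subgroup (H : Subgroup W) (c : W) :
    (∑ u : ↥H, (if (u : W) = c then (1 : ℕ) else 0)) = if c ∈ H then 1 else 0 := by
  by_cases hc : c ∈ H
  · rw [if_pos hc]
    calc (∑ u : ↥H, if (u : W) = c then (1 : ℕ) else 0)
        = ∑ u : ↥H, if u = (⟨c, hc⟩ : ↥H) then 1 else 0 :=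
          Finset.sum_congr rfl (fun u _ => by
            congr 1
            simp [Subtype.ext_iff])
      _ = 1 := by simp
  · rw [if_neg hc]
    apply Finset.sum_eq_zero
    intro u _
    rw [if_neg]
    intro h
    exact hc (h ▸ u.2)

lemma sum_fixedBy_eq :
    (∑ g : DC cs I J, Fintype.card (MulAction.fixedBy W g)) = cIJ cs I J := by
  have h1 : ∀ g : DC cs I J, Fintype.card (MulAction.fixedBy W g)
      = ∑ z : W, (if g • z = z then 1 else 0) := by
    intro g
    rw [← Finset.card_filter]
    rw [← Set.toFinset_card]
    congr 1
    ext z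
    simp [MulAction.mem_fixedBy]
  rw [Finset.sum_congr rfl (fun g _ => h1 g)]
  rw [Fintype.sum_prod_type]
  have h2 : ∀ (u : ↥(PP cs I)) (v : ↥(PP cs J)) (z : W),
      (((u, v) : DC cs I J) • z = z) ↔ ((u : W) = z * (v : W) * z⁻¹) := by
    intro u v z
    rw [dc_smul_def]
    constructor
    · intro h
      have h3 : (u : W) * z = z * (v : W) := by
        have := congrArg (fun t => t * (v : W)) h
        dsimp at this
        rwa [inv_mul_cancel_right] at this
      calc (u : W) = (u : W) * z * z⁻¹ := by rw [mul_inv_cancel_right]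
        _ = z * (v : W) * z⁻¹ := by rw [h3]
    · intro h
      rw [h]
      group
  calc (∑ u : ↥(PP cs I), ∑ v : ↥(PP cs J), ∑ z : W,
        (if ((u, v) : DC cs I J) • z = z then 1 else 0))
      = ∑ v : ↥(PP cs J), ∑ z : W, ∑ u : ↥(PP cs I),
        (if (u : W) = z * (v : W) * z⁻¹ then 1 else 0) := by
        rw [Finset.sum_comm]
        refine Finset.sum_congr rfl (fun v _ => ?_)
        rw [Finset.sum_comm]
        refine Finset.sum_congr rfl (fun z _ => ?_)
        refine Finset.sum_congr rfl (fun u _ => ?_)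
        exact if_congr (h2 u v z) rfl rfl
    _ = ∑ v : ↥(PP cs J), ∑ z : W, (if z * (v : W) * z⁻¹ ∈ PP cs I then 1 else 0) := by
        refine Finset.sum_congr rfl (fun v _ => Finset.sum_congr rfl (fun z _ => ?_))
        exact sum_indicator_subgroup (PP cs I) _
    _ = ∑ z : W, ∑ v : ↥(PP cs J), (if z * (v : W) * z⁻¹ ∈ PP cs I then 1 else 0) :=
        Finset.sum_comm
    _ = cIJ cs I J := by
        rw [cIJ]
        refine Finset.sum_congr rfl (fun z _ => ?_)
        rw [← Finset.sum_subtype (Finset.univ.filter (fun b : W => b ∈ PP cs J))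
          (by intro x; simp) (fun b => if z * b * z⁻¹ ∈ PP cs I then 1 else 0)]
        rw [Finset.sum_filter]
        refine Finset.sum_congr rfl (fun b _ => ?_)
        by_cases hb1 : b ∈ PP cs J <;> by_cases hb2 : z * b * z⁻¹ ∈ PP cs I <;>
          simp [hb1, hb2]

lemma cIJ_eq_burnside :
    cIJ cs I J = redCount cs I J * (Nat.card (PP cs I) * Nat.card (PP cs J)) := by
  have hb := MulAction.sum_card_fixedBy_eq_card_orbits_mul_card_group (DC cs I J) W
  rw [sum_fixedBy_eq] at hb
  rw [hb, card_orbits_eq_red]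
  congr 1
  rw [Fintype.card_prod]
  rw [Nat.card_eq_fintype_card, Nat.card_eq_fintype_card]

lemma K1 : ∑ w : W, (NI cs I w) * (NI cs J w) = Fintype.card W * cIJ cs I J := by
  have step1 : ∑ w : W, (NI cs I w) * (NI cs J w)
      = ∑ w : W, ∑ x : W, ∑ y : W,
        (if x⁻¹ * w * x ∈ PP cs I then 1 else 0) * (if y⁻¹ * w * y ∈ PP cs J then 1 else 0) := by
    refine Finset.sum_congr rfl (fun w _ => ?_)
    rw [NI_eq, NI_eq, Finset.sum_mul_sum]
  rw [step1, Finset.sum_comm]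
  have step2 : ∀ x : W, (∑ w : W, ∑ y : W,
      (if x⁻¹ * w * x ∈ PP cs I then 1 else 0) * (if y⁻¹ * w * y ∈ PP cs J then 1 else 0))
      = cIJ cs I J := by
    intro x
    have e1 : (∑ w : W, ∑ y : W,
        (if x⁻¹ * w * x ∈ PP cs I then 1 else 0) * (if y⁻¹ * w * y ∈ PP cs J then 1 else 0))
        = ∑ u : W, ∑ z : W,
        (if u ∈ PP cs I then 1 else 0) * (if z⁻¹ * u * z ∈ PP cs J then 1 else 0) := by
      rw [← Equiv.sum_comp (conjEquiv x) (fun w => ∑ y : W,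
        (if x⁻¹ * w * x ∈ PP cs I then 1 else 0) * (if y⁻¹ * w * y ∈ PP cs J then 1 else 0))]
      refine Finset.sum_congr rfl (fun u _ => ?_)
      rw [conjEquiv_apply]
      rw [← Equiv.sum_comp (Equiv.mulLeft x) (fun y =>
        (if x⁻¹ * (x * u * x⁻¹) * x ∈ PP cs I then 1 else 0)
          * (if y⁻¹ * (x * u * x⁻¹) * y ∈ PP cs J then 1 else 0))]
      refine Finset.sum_congr rfl (fun z _ => ?_)
      rw [Equiv.coe_mulLeft]
      have hw : (x⁻¹ * (x * u * x⁻¹) * x ∈ PP cs I) ↔ (u ∈ PP cs I) := by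
        rw [show x⁻¹ * (x * u * x⁻¹) * x = u by group]
      have hy : ((x * z)⁻¹ * (x * u * x⁻¹) * (x * z) ∈ PP cs J)
          ↔ (z⁻¹ * u * z ∈ PP cs J) := by
        rw [show (x * z)⁻¹ * (x * u * x⁻¹) * (x * z) = z⁻¹ * u * z by group]
      rw [if_congr hw rfl rfl, if_congr hy rfl rfl]
    rw [e1, Finset.sum_comm, cIJ]
    refine Finset.sum_congr rfl (fun z _ => ?_)
    rw [← Equiv.sum_comp (conjEquiv z) (fun u =>
      (if u ∈ PP cs I then 1 else 0) * (if z⁻¹ * u * z ∈ PP cs J then 1 else 0))]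
    refine Finset.sum_congr rfl (fun b _ => ?_)
    rw [conjEquiv_apply]
    have hb2 : (z⁻¹ * (z * b * z⁻¹) * z ∈ PP cs J) ↔ (b ∈ PP cs J) := by
      rw [show z⁻¹ * (z * b * z⁻¹) * z = b by group]
    rw [if_congr hb2 rfl rfl]
    by_cases h1 : b ∈ PP cs J <;> by_cases h2 : z * b * z⁻¹ ∈ PP cs I <;>
      simp [h1, h2]
  calc ∑ x : W, (∑ w : W, ∑ y : W,
      (if x⁻¹ * w * x ∈ PP cs I then 1 else 0) * (if y⁻¹ * w * y ∈ PP cs J then 1 else 0))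
      = ∑ _x : W, cIJ cs I J := Finset.sum_congr rfl (fun x _ => step2 x)
    _ = Fintype.card W * cIJ cs I J := by
        rw [Finset.sum_const, Finset.card_univ, smul_eq_mul]

end Part5
end AZFinite

namespace AZFinite
open CoxeterSystem List Function MulAction
open scoped Classical

section Part6
variable {B : Type*} [Fintype B] {W : Type*} [Group W] [Fintype W]
variable {M : CoxeterMatrix B} (cs : CoxeterSystem M W)

local prefix:100 "σ" => cs.simple
local prefix:100 "π" => cs.wordProd
local prefix:100 "ℓ" => cs.length

lemma neg_one_pow_congr {R : Type*} [Monoid R] [HasDistribNeg R] {a b : ℕ}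
    (h : a % 2 = b % 2) : (-1 : R)^a = (-1 : R)^b := by
  conv_lhs => rw [← Nat.div_add_mod a 2]
  conv_rhs => rw [← Nat.div_add_mod b 2]
  rw [pow_add, pow_add, pow_mul, pow_mul, neg_one_sq, one_pow, one_pow, h]

lemma length_conj_mod_two (g h : W) : ℓ (h⁻¹ * g * h) % 2 = ℓ g % 2 := by
  have h1 := cs.length_mul_mod_two (h⁻¹ * g) h
  have h2 := cs.length_mul_mod_two h⁻¹ g
  have h3 := cs.length_inv h
  omega

noncomputable def fR (w : W) : ℝ :=
  ∑ I ∈ Finset.powerset (Finset.univ : Finset B),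
    (-1 : ℝ)^I.card * (((Nat.card (PP cs I)) : ℝ)⁻¹ * (NI cs I w))

lemma PP_empty : PP cs (∅ : Finset B) = ⊥ := by
  rw [PP]
  rw [show ((∅ : Finset B) : Set B) = (∅ : Set B) by simp]
  rw [Set.image_empty, Subgroup.closure_empty]

lemma card_PP_empty : Nat.card (PP cs (∅ : Finset B)) = 1 := by
  rw [PP_empty]
  exact Subgroup.card_bot

lemma card_PP_pos (I : Finset B) : 0 < Nat.card (PP cs I) :=
  Nat.card_pos

/-- Sum of signs over a parabolic subgroup. -/
lemma sigma_PP (I : Finset B) :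
    (∑ v ∈ Finset.univ.filter (fun v : W => v ∈ PP cs I), (-1 : ℝ)^(ℓ v))
      = if I = ∅ then 1 else 0 := by
  by_cases hI : I = ∅
  · subst hI
    rw [if_pos rfl]
    have : Finset.univ.filter (fun v : W => v ∈ PP cs (∅ : Finset B)) = {1} := by
      ext v
      simp [PP_empty, Subgroup.mem_bot]
    rw [this, Finset.sum_singleton, cs.length_one, pow_zero]
  · rw [if_neg hI]
    obtain ⟨i, hi⟩ := Finset.nonempty_iff_ne_empty.mpr hI
    have hsi : σ i ∈ PP cs I := Subgroup.subset_closure ⟨i, by simpa using hi, rfl⟩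
    apply Finset.sum_involution (fun v _ => σ i * v)
    · intro v hv
      rcases cs.length_simple_mul v i with hh | hh
      · rw [hh, pow_succ]; ring
      · rw [show ℓ v = ℓ (σ i * v) + 1 from hh.symm, pow_succ]; ring
    · intro v _ _
      intro hEq
      have : cs.simple i = 1 := by
        have := congrArg (fun t => t * v⁻¹) hEq
        simpa using this
      have h1 : cs.length (cs.simple i) = 1 := cs.length_simple i
      rw [this, cs.length_one] at h1
      exact absurd h1 (by omega)
    · intro v hv
      simp only [Finset.mem_filter, Finset.mem_univ, true_and] at hv ⊢
      exact mul_mem hsi hv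
    · intro v _
      rw [← mul_assoc, cs.simple_mul_simple_self, one_mul]

lemma sum_NI_sgn (I : Finset B) :
    (∑ w : W, (NI cs I w : ℝ) * (-1 : ℝ)^(ℓ w))
      = (Fintype.card W : ℝ) * (if I = ∅ then 1 else 0) := by
  have step1 : ∀ w : W, (NI cs I w : ℝ) * (-1 : ℝ)^(ℓ w)
      = ∑ x : W, (if x⁻¹ * w * x ∈ PP cs I then (1:ℝ) else 0) * (-1 : ℝ)^(ℓ w) := by
    intro w
    rw [← Finset.sum_mul]
    congr 1
    rw [show ((NI cs I w : ℕ) : ℝ) = ((∑ x : W, if x⁻¹ * w * x ∈ PP cs I then (1:ℕ) else 0 : ℕ) : ℝ) by rw [← NI_eq]]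
    push_cast
    refine Finset.sum_congr rfl (fun x _ => ?_)
    by_cases h : x⁻¹ * w * x ∈ PP cs I <;> simp [h]
  rw [Finset.sum_congr rfl (fun w _ => step1 w), Finset.sum_comm]
  have step2 : ∀ x : W, (∑ w : W, (if x⁻¹ * w * x ∈ PP cs I then (1:ℝ) else 0) * (-1 : ℝ)^(ℓ w))
      = if I = ∅ then 1 else 0 := by
    intro x
    rw [← Equiv.sum_comp (conjEquiv x) (fun w =>
      (if x⁻¹ * w * x ∈ PP cs I then (1:ℝ) else 0) * (-1 : ℝ)^(ℓ w))]
    rw [← sigma_PP cs I, Finset.sum_filter]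
    refine Finset.sum_congr rfl (fun v _ => ?_)
    rw [conjEquiv_apply]
    have hmem : (x⁻¹ * (x * v * x⁻¹) * x ∈ PP cs I) ↔ (v ∈ PP cs I) := by
      rw [show x⁻¹ * (x * v * x⁻¹) * x = v by group]
    have hsgn : (-1 : ℝ)^(ℓ (x * v * x⁻¹)) = (-1 : ℝ)^(ℓ v) := by
      have h2 := length_conj_mod_two cs v x⁻¹
      rw [inv_inv] at h2
      exact neg_one_pow_congr h2
    rw [if_congr hmem rfl rfl, hsgn]
    by_cases h : v ∈ PP cs I <;> simp [h]
  rw [Finset.sum_congr rfl (fun x _ => step2 x), Finset.sum_const, Finset.card_univ,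
    nsmul_eq_mul]

lemma S2 : ∑ w : W, fR cs w * (-1 : ℝ)^(ℓ w) = Fintype.card W := by
  have step1 : ∀ w : W, fR cs w * (-1 : ℝ)^(ℓ w)
      = ∑ I ∈ Finset.powerset (Finset.univ : Finset B),
        (-1 : ℝ)^I.card * (((Nat.card (PP cs I)) : ℝ)⁻¹ * ((NI cs I w : ℝ) * (-1 : ℝ)^(ℓ w))) := by
    intro w
    rw [fR, Finset.sum_mul]
    exact Finset.sum_congr rfl (fun I _ => by ring)
  rw [Finset.sum_congr rfl (fun w _ => step1 w), Finset.sum_comm]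
  have step2 : ∀ I : Finset B, I ∈ Finset.powerset (Finset.univ : Finset B) →
      (∑ w : W, (-1 : ℝ)^I.card * (((Nat.card (PP cs I)) : ℝ)⁻¹ * ((NI cs I w : ℝ) * (-1 : ℝ)^(ℓ w))))
      = if I = ∅ then (Fintype.card W : ℝ) else 0 := by
    intro I _
    rw [← Finset.mul_sum, ← Finset.mul_sum, sum_NI_sgn]
    by_cases hI : I = ∅
    · subst hI
      rw [if_pos rfl, if_pos rfl, card_PP_empty]
      simp
    · rw [if_neg hI, if_neg hI]
      simp
  rw [Finset.sum_congr rfl step2, Finset.sum_ite_eq' (Finset.powerset Finset.univ) ∅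
    (fun _ => (Fintype.card W : ℝ))]
  simp

end Part6
end AZFinite

namespace AZFinite
open CoxeterSystem List Function MulAction
open scoped Classical

section Part7
variable {B : Type*} [Fintype B] {W : Type*} [Group W] [Fintype W]
variable {M : CoxeterMatrix B} (cs : CoxeterSystem M W)

local prefix:100 "σ" => cs.simple
local prefix:100 "π" => cs.wordProd
local prefix:100 "ℓ" => cs.length

set_option maxHeartbeats 1000000

lemma powerset_sign_sum (K : Finset B) :
    (∑ I ∈ Finset.powerset (Finset.univ : Finset B),
        (-1 : ℝ)^I.card * (if I ⊆ K then (1:ℝ) else 0))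
      = if K = ∅ then 1 else 0 := by
  classical
  have step1 : (∑ I ∈ Finset.powerset (Finset.univ : Finset B),
        (-1 : ℝ)^I.card * (if I ⊆ K then (1:ℝ) else 0))
      = ∑ I ∈ Finset.powerset (Finset.univ : Finset B),
        (if I ⊆ K then (-1 : ℝ)^I.card else 0) := by
    refine Finset.sum_congr rfl (fun I _ => ?_)
    by_cases h : I ⊆ K <;> simp [h]
  rw [step1, ← Finset.sum_filter]
  have step2 : (Finset.powerset (Finset.univ : Finset B)).filter (fun I => I ⊆ K)
      = Finset.powerset K := by
    ext A
    simp [Finset.mem_powerset]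
  rw [step2]
  have step3 := Finset.sum_powerset_neg_one_pow_card (x := K)
  have step4 : (∑ I ∈ Finset.powerset K, (-1 : ℝ)^I.card)
      = ((∑ I ∈ Finset.powerset K, (-1 : ℤ)^I.card : ℤ) : ℝ) := by
    push_cast
    rfl
  rw [step4, step3]
  by_cases h : K = ∅ <;> simp [h]

lemma K4 : (∑ I ∈ Finset.powerset (Finset.univ : Finset B),
      ∑ J ∈ Finset.powerset (Finset.univ : Finset B),
        (-1 : ℝ)^I.card * (-1 : ℝ)^J.card * (redCount cs I J : ℝ)) = 1 := by
  have hred : ∀ I J : Finset B, (redCount cs I J : ℝ)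
      = ∑ z : W, (if (∀ i ∈ I, ¬ cs.IsLeftDescent z i) then (1:ℝ) else 0)
          * (if (∀ j ∈ J, ¬ cs.IsRightDescent z j) then (1:ℝ) else 0) := by
    intro I J
    rw [redCount, Finset.card_filter]
    push_cast
    refine Finset.sum_congr rfl (fun z _ => ?_)
    by_cases h1 : (∀ i ∈ I, ¬ cs.IsLeftDescent z i)
    · by_cases h2 : (∀ j ∈ J, ¬ cs.IsRightDescent z j)
      · rw [if_pos (show Red cs I J z from ⟨h1, h2⟩), if_pos h1, if_pos h2, mul_one]
      · rw [if_neg (fun hr => h2 (show Red cs I J z from hr).2), if_neg h2, mul_zero]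
    · rw [if_neg (fun hr => h1 (show Red cs I J z from hr).1), if_neg h1, zero_mul]
  calc (∑ I ∈ Finset.powerset (Finset.univ : Finset B),
      ∑ J ∈ Finset.powerset (Finset.univ : Finset B),
        (-1 : ℝ)^I.card * (-1 : ℝ)^J.card * (redCount cs I J : ℝ))
      = ∑ I ∈ Finset.powerset (Finset.univ : Finset B), ∑ z : W,
          ∑ J ∈ Finset.powerset (Finset.univ : Finset B),
          ((-1 : ℝ)^I.card * (if ∀ i ∈ I, ¬ cs.IsLeftDescent z i then (1:ℝ) else 0))
            * ((-1 : ℝ)^J.card * (if ∀ j ∈ J, ¬ cs.IsRightDescent z j then (1:ℝ) else 0)) := by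
        refine Finset.sum_congr rfl (fun I _ => ?_)
        calc (∑ J ∈ Finset.powerset (Finset.univ : Finset B),
            (-1 : ℝ)^I.card * (-1 : ℝ)^J.card * (redCount cs I J : ℝ))
            = ∑ J ∈ Finset.powerset (Finset.univ : Finset B), ∑ z : W,
              ((-1 : ℝ)^I.card * (if ∀ i ∈ I, ¬ cs.IsLeftDescent z i then (1:ℝ) else 0))
                * ((-1 : ℝ)^J.card
                    * (if ∀ j ∈ J, ¬ cs.IsRightDescent z j then (1:ℝ) else 0)) := by
              refine Finset.sum_congr rfl (fun J _ => ?_)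
              rw [hred I J, Finset.mul_sum]
              refine Finset.sum_congr rfl (fun z _ => ?_)
              ring
          _ = _ := Finset.sum_comm
    _ = ∑ z : W, ∑ I ∈ Finset.powerset (Finset.univ : Finset B),
          ∑ J ∈ Finset.powerset (Finset.univ : Finset B),
          ((-1 : ℝ)^I.card * (if ∀ i ∈ I, ¬ cs.IsLeftDescent z i then (1:ℝ) else 0))
            * ((-1 : ℝ)^J.card * (if ∀ j ∈ J, ¬ cs.IsRightDescent z j then (1:ℝ) else 0)) :=
        Finset.sum_comm
    _ = ∑ z : W, (if ((∀ i : B, cs.IsLeftDescent z i) ∧ (∀ i : B, cs.IsRightDescent z i))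
          then (1:ℝ) else 0) := by
        refine Finset.sum_congr rfl (fun z _ => ?_)
        rw [← Finset.sum_mul_sum]
        have congrL : (∑ I ∈ Finset.powerset (Finset.univ : Finset B),
            (-1 : ℝ)^I.card * (if ∀ i ∈ I, ¬ cs.IsLeftDescent z i then (1:ℝ) else 0))
            = ∑ I ∈ Finset.powerset (Finset.univ : Finset B),
            (-1 : ℝ)^I.card
              * (if I ⊆ Finset.univ.filter (fun i => ¬ cs.IsLeftDescent z i)
                  then (1:ℝ) else 0) := by
          refine Finset.sum_congr rfl (fun I _ => ?_)
          refine congrArg _ (if_congr ?_ rfl rfl)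
          constructor
          · intro h i hi
            exact Finset.mem_filter.mpr ⟨Finset.mem_univ i, h i hi⟩
          · intro h i hi
            exact (Finset.mem_filter.mp (h hi)).2
        have congrR : (∑ J ∈ Finset.powerset (Finset.univ : Finset B),
            (-1 : ℝ)^J.card * (if ∀ j ∈ J, ¬ cs.IsRightDescent z j then (1:ℝ) else 0))
            = ∑ J ∈ Finset.powerset (Finset.univ : Finset B),
            (-1 : ℝ)^J.card
              * (if J ⊆ Finset.univ.filter (fun j => ¬ cs.IsRightDescent z j)
                  then (1:ℝ) else 0) := by
          refine Finset.sum_congr rfl (fun J _ => ?_)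
          refine congrArg _ (if_congr ?_ rfl rfl)
          constructor
          · intro h j hj
            exact Finset.mem_filter.mpr ⟨Finset.mem_univ j, h j hj⟩
          · intro h j hj
            exact (Finset.mem_filter.mp (h hj)).2
        rw [congrL, congrR, powerset_sign_sum, powerset_sign_sum]
        have hL : (Finset.univ.filter (fun i => ¬ cs.IsLeftDescent z i) = ∅)
            ↔ (∀ i : B, cs.IsLeftDescent z i) := by
          rw [Finset.filter_eq_empty_iff]
          simp
        have hR : (Finset.univ.filter (fun j => ¬ cs.IsRightDescent z j) = ∅)
            ↔ (∀ i : B, cs.IsRightDescent z i) := by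
          rw [Finset.filter_eq_empty_iff]
          simp
        by_cases h1 : ∀ i : B, cs.IsLeftDescent z i <;>
          by_cases h2 : ∀ i : B, cs.IsRightDescent z i <;>
          simp [hL, hR, h1, h2]
    _ = 1 := by
        rw [← Finset.sum_filter]
        rw [Finset.sum_const, nsmul_eq_mul, mul_one, card_allDescents cs]
        norm_num

lemma S3 : ∑ w : W, fR cs w * fR cs w = Fintype.card W := by
  have hcast : ∀ I J : Finset B, (∑ w : W, (NI cs I w : ℝ) * (NI cs J w : ℝ))
      = (Fintype.card W : ℝ) * ((redCount cs I J : ℝ)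
          * ((Nat.card (PP cs I) : ℝ) * (Nat.card (PP cs J) : ℝ))) := by
    intro I J
    have h1 := K1 cs I J
    rw [cIJ_eq_burnside] at h1
    calc (∑ w : W, (NI cs I w : ℝ) * (NI cs J w : ℝ))
        = ((∑ w : W, NI cs I w * NI cs J w : ℕ) : ℝ) := by push_cast; rfl
      _ = _ := by rw [h1]; push_cast; ring
  have step1 : ∀ w : W, fR cs w * fR cs w
      = ∑ I ∈ Finset.powerset (Finset.univ : Finset B),
          ∑ J ∈ Finset.powerset (Finset.univ : Finset B),
          ((-1 : ℝ)^I.card * (((Nat.card (PP cs I)) : ℝ)⁻¹ * (NI cs I w)))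
            * ((-1 : ℝ)^J.card * (((Nat.card (PP cs J)) : ℝ)⁻¹ * (NI cs J w))) := by
    intro w
    rw [fR, Finset.sum_mul_sum]
  rw [Finset.sum_congr rfl (fun w _ => step1 w)]
  rw [Finset.sum_comm]
  have swap2 : ∀ I ∈ Finset.powerset (Finset.univ : Finset B),
      (∑ w : W, ∑ J ∈ Finset.powerset (Finset.univ : Finset B),
          ((-1 : ℝ)^I.card * (((Nat.card (PP cs I)) : ℝ)⁻¹ * (NI cs I w)))
            * ((-1 : ℝ)^J.card * (((Nat.card (PP cs J)) : ℝ)⁻¹ * (NI cs J w))))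
      = ∑ J ∈ Finset.powerset (Finset.univ : Finset B),
          (-1 : ℝ)^I.card * (-1 : ℝ)^J.card * (redCount cs I J : ℝ)
            * (Fintype.card W : ℝ) := by
    intro I _
    rw [Finset.sum_comm]
    refine Finset.sum_congr rfl (fun J _ => ?_)
    have hPI : ((Nat.card (PP cs I)) : ℝ) ≠ 0 := by
      have := card_PP_pos cs I
      positivity
    have hPJ : ((Nat.card (PP cs J)) : ℝ) ≠ 0 := by
      have := card_PP_pos cs J
      positivity
    have e1 : (∑ w : W,
        ((-1 : ℝ)^I.card * (((Nat.card (PP cs I)) : ℝ)⁻¹ * (NI cs I w)))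
          * ((-1 : ℝ)^J.card * (((Nat.card (PP cs J)) : ℝ)⁻¹ * (NI cs J w))))
        = ((-1 : ℝ)^I.card * (-1 : ℝ)^J.card * (((Nat.card (PP cs I)) : ℝ)⁻¹
            * ((Nat.card (PP cs J)) : ℝ)⁻¹))
          * (∑ w : W, (NI cs I w : ℝ) * (NI cs J w : ℝ)) := by
      rw [Finset.mul_sum]
      exact Finset.sum_congr rfl (fun w _ => by ring)
    rw [e1, hcast I J]
    field_simp
  rw [Finset.sum_congr rfl swap2]
  have : (∑ I ∈ Finset.powerset (Finset.univ : Finset B),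
      ∑ J ∈ Finset.powerset (Finset.univ : Finset B),
        (-1 : ℝ)^I.card * (-1 : ℝ)^J.card * (redCount cs I J : ℝ)
          * (Fintype.card W : ℝ))
      = (∑ I ∈ Finset.powerset (Finset.univ : Finset B),
        ∑ J ∈ Finset.powerset (Finset.univ : Finset B),
          (-1 : ℝ)^I.card * (-1 : ℝ)^J.card * (redCount cs I J : ℝ))
        * (Fintype.card W : ℝ) := by
    rw [Finset.sum_mul]
    refine Finset.sum_congr rfl (fun I _ => ?_)
    rw [Finset.sum_mul]
  rw [this, K4]
  ring

lemma fR_eq_sgn (w : W) : fR cs w = (-1 : ℝ)^(ℓ w) := by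
  have key : ∑ v : W, (fR cs v - (-1 : ℝ)^(ℓ v))^2 = 0 := by
    have expand : ∀ v : W, (fR cs v - (-1 : ℝ)^(ℓ v))^2
        = fR cs v * fR cs v - 2 * (fR cs v * (-1 : ℝ)^(ℓ v))
            + (-1 : ℝ)^(ℓ v) * (-1 : ℝ)^(ℓ v) := by
      intro v; ring
    rw [Finset.sum_congr rfl (fun v _ => expand v)]
    rw [Finset.sum_add_distrib, Finset.sum_sub_distrib, ← Finset.mul_sum, S3, S2]
    have hsq : ∀ v : W, (-1 : ℝ)^(ℓ v) * (-1 : ℝ)^(ℓ v) = 1 := by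
      intro v; rw [← mul_pow]; norm_num
    rw [Finset.sum_congr rfl (fun v _ => hsq v), Finset.sum_const, Finset.card_univ,
      nsmul_eq_mul, mul_one]
    ring
  have h2 := (Finset.sum_eq_zero_iff_of_nonneg
    (fun v _ => sq_nonneg (fR cs v - (-1 : ℝ)^(ℓ v)))).mp key w (Finset.mem_univ w)
  have h3 : fR cs w - (-1 : ℝ)^(ℓ w) = 0 := by
    have := sq_eq_zero_iff.mp h2
    exact this
  linarith

end Part7
end AZFinite

namespace AZFinite
open CoxeterSystem List Function
open scoped Classical

section Part8
set_option maxHeartbeats 1000000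
variable {B : Type*} [Fintype B] {W : Type*} [Group W] [Fintype W]
variable {M : CoxeterMatrix B}

/-- The Aubert–Zelevinsky-type duality on class functions of a finite Coxeter group:
D χ = Σ_{I ⊆ S} (-1)^{|I|} Ind_{W_I}^W Res_{W_I}^W χ, written via the induced
character formula (Ind Res χ)(w) = (1/|W_I|) Σ_{x ∈ W, x⁻¹wx ∈ W_I} χ(x⁻¹wx). -/
noncomputable def D (cs : CoxeterSystem M W) (χ : W → ℂ) : W → ℂ := fun w =>
  ∑ I ∈ Finset.powerset (Finset.univ : Finset B),
    (-1 : ℂ) ^ I.card *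
      ((Nat.card (Subgroup.closure (cs.simple '' (I : Set B))) : ℂ)⁻¹ *
        ∑ x : W,
          Set.indicator
            {y : W | y ∈ Subgroup.closure (cs.simple '' (I : Set B))} χ (x⁻¹ * w * x))

variable (cs : CoxeterSystem M W)

lemma D_eq_general (χ : W → ℂ) (hχ : ∀ g h : W, χ (h⁻¹ * g * h) = χ g) (w : W) :
    D cs χ w = ((fR cs w : ℝ) : ℂ) * χ w := by
  have hins : ∀ I : Finset B,
      (∑ x : W, Set.indicator
        {y : W | y ∈ Subgroup.closure (cs.simple '' (I : Set B))} χ (x⁻¹ * w * x))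
      = (NI cs I w : ℂ) * χ w := by
    intro I
    have hone : ∀ x : W, Set.indicator
        {y : W | y ∈ Subgroup.closure (cs.simple '' (I : Set B))} χ (x⁻¹ * w * x)
        = if x⁻¹ * w * x ∈ PP cs I then χ w else 0 := by
      intro x
      rw [Set.indicator_apply]
      by_cases h : x⁻¹ * w * x ∈ PP cs I
      · rw [if_pos h, if_pos (show x⁻¹ * w * x ∈ {y : W | y ∈ Subgroup.closure
          (cs.simple '' (I : Set B))} from h)]
        exact hχ w x
      · rw [if_neg h, if_neg (show x⁻¹ * w * x ∉ {y : W | y ∈ Subgroup.closure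
          (cs.simple '' (I : Set B))} from h)]
    rw [Finset.sum_congr rfl (fun x _ => hone x), ← Finset.sum_filter,
      Finset.sum_const, nsmul_eq_mul]
    rfl
  have hfr : ((fR cs w : ℝ) : ℂ)
      = ∑ I ∈ Finset.powerset (Finset.univ : Finset B),
        (-1 : ℂ)^I.card * (((Nat.card (PP cs I)) : ℂ)⁻¹ * (NI cs I w : ℂ)) := by
    rw [fR]
    push_cast
    rfl
  rw [D]
  rw [Finset.sum_congr rfl (fun I _ => by rw [hins I])]
  rw [hfr, Finset.sum_mul]
  refine Finset.sum_congr rfl (fun I _ => ?_)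
  rw [show Subgroup.closure (cs.simple '' (I : Set B)) = PP cs I from rfl]
  ring

lemma D_twist (χ : W → ℂ) (hχ : ∀ g h : W, χ (h⁻¹ * g * h) = χ g) (w : W) :
    D cs χ w = (-1 : ℂ) ^ cs.length w * χ w := by
  rw [D_eq_general cs χ hχ w, fR_eq_sgn]
  push_cast
  ring

/-- For a class function χ on a finite Coxeter group W, the duality D satisfies
D[M] = [M ⊗ sgn], i.e. (D χ)(w) = (-1)^{ℓ(w)} χ(w); in particular D² = id. -/
theorem duality_is_sign_twist (cs : CoxeterSystem M W) (χ : W → ℂ)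
    (hχ : ∀ g h : W, χ (h⁻¹ * g * h) = χ g) :
    (∀ w : W, D cs χ w = (-1 : ℂ) ^ cs.length w * χ w) ∧
    (∀ w : W, D cs (D cs χ) w = χ w) := by
  constructor
  · exact D_twist cs χ hχ
  · intro w
    have hχ' : ∀ g h : W, (D cs χ) (h⁻¹ * g * h) = (D cs χ) g := by
      intro g h
      rw [D_twist cs χ hχ, D_twist cs χ hχ, hχ g h]
      have := neg_one_pow_congr (R := ℂ) (length_conj_mod_two cs g h)
      rw [this]
    rw [D_twist cs (D cs χ) hχ' w, D_twist cs χ hχ w]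
    rw [← mul_assoc, ← mul_pow]
    norm_num

end Part8
end AZFinite
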